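/- Let S = [0,1], A a finite nonempty set, H ≥ 1 and n ≥ 1 natural numbers, L > 0, α > 0. Let r : S × A → [0,1] satisfy |r(s,a) − r(s',a)| ≤ L|s − s'|^α for all s, s', a, with s ↦ r(s,a) measurable, and for each (s,a) let μ_{s,a} be a Borel probability measure on S with ‖μ_{s,a} − μ_{s',a}‖_{TV} ≤ L|s − s'|^α for all s, s', a, with t ↦ μ_{t,a}(E) measurable for every Borel E. The state space [0,1] is partitioned into n intervals I_1 = [0, 1/n] and I_j = ((j−1)/n, j/n] for j = 2, …, n; set r^{agg}(I_j, a) = n·∫_{I_j} r(s,a) ds and P^{agg}(I_{j'} | I_j, a) = n·∫_{I_j} μ_{t,a}(I_{j'}) dt. Let measurable V_1, …, V_{H+1} : S → ℝ satisfy V_{H+1} ≡ 0 and V_h(s) = max_{a∈A} ( r(s,a) + ∫_S V_{h+1} dμ_{s,a} ) for 1 ≤ h ≤ H (with the integrals defined), and let W_1, …, W_{H+1} : {1,…,n} → ℝ satisfy W_{H+1} ≡ 0 and W_h(j) = max_{a∈A} ( r^{agg}(I_j, a) + ∑_{j'=1}^n P^{agg}(I_{j'} | I_j, a)·W_{h+1}(j')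 ) for 1 ≤ h ≤ H. Then for all 1 ≤ h ≤ H+1, all j ∈ {1,…,n}, and all x ∈ I_j, |V_h(x) − W_h(j)| ≤ (H − h + 1)·(H + 1)·L·n^{−α}. -/

import Mathlib

open MeasureTheory Set
open scoped ENNReal

/-- The partition of the state space `[0,1]` into `n` intervals:
`I 1 = [0, 1/n]` and `I j = ((j-1)/n, j/n]` for `j = 2, …, n`. -/
def part (n j : ℕ) : Set ℝ :=
  if j = 1 then Icc 0 (1 / n) else Ioc (((j : ℝ) - 1) / n) ((j : ℝ) / n)

/-- The aggregate reward `r^{agg}(I_j, a) = n·∫_{I_j} r(s,a) ds`. -/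
noncomputable def ragg {A : Type*} (n : ℕ) (r : ℝ → A → ℝ) (j : ℕ) (a : A) : ℝ :=
  n * ∫ s in part n j, r s a

/-- The averaged aggregated transition probability
`P^{agg}(I_{j'} | I_j, a) = n·∫_{I_j} μ_{t,a}(I_{j'}) dt`. -/
noncomputable def Pagg {A : Type*} (n : ℕ) (μ : ℝ → A → Measure ℝ) (a : A)
    (j j' : ℕ) : ℝ :=
  n * ∫ t in part n j, (μ t a (part n j')).toReal

/-- The total variation distance between two finite measures. -/
noncomputable def tvDist {X : Type*} [MeasurableSpace X]
    (μ ν : Measure X) [IsFiniteMeasure μ] [IsFiniteMeasure ν] : ℝ :=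
  ((μ.toSignedMeasure - ν.toSignedMeasure).totalVariation univ).toReal

/- ### Auxiliary lemmas -/

lemma VDE.integrable_of_bounded {X : Type*} [MeasurableSpace X] (m : Measure X)
    [IsFiniteMeasure m] (g : X → ℝ) (hg : Measurable g) (C : ℝ) (hC : ∀ x, |g x| ≤ C) :
    Integrable g m :=
  ⟨hg.aestronglyMeasurable, HasFiniteIntegral.of_bounded (C := C)
    (Filter.Eventually.of_forall (fun x => by simpa using hC x))⟩

lemma VDE.abs_integral_sub_le_tvDist {X : Type*} [MeasurableSpace X]
    (μ ν : Measure X) [IsFiniteMeasure μ] [IsFiniteMeasure ν]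
    (g : X → ℝ) (hg : Measurable g) (C : ℝ) (hC : ∀ x, |g x| ≤ C) :
    |∫ x, g x ∂μ - ∫ x, g x ∂ν| ≤ C * tvDist μ ν := by
  set s := μ.toSignedMeasure - ν.toSignedMeasure with hs
  set p := s.toJordanDecomposition.posPart with hp
  set q := s.toJordanDecomposition.negPart with hq
  have hJ := s.toSignedMeasure_toJordanDecomposition
  have hμν : μ + q = ν + p := by
    ext E hE
    have h1 : (p.toSignedMeasure - q.toSignedMeasure) E = s E := by
      conv_rhs => rw [← hJ, JordanDecomposition.toSignedMeasure]
    rw [VectorMeasure.sub_apply, Measure.toSignedMeasure_apply_measurable hE,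
      Measure.toSignedMeasure_apply_measurable hE] at h1
    rw [hs, VectorMeasure.sub_apply, Measure.toSignedMeasure_apply_measurable hE,
      Measure.toSignedMeasure_apply_measurable hE] at h1
    rw [Measure.add_apply, Measure.add_apply]
    have fμ := measure_ne_top μ E
    have fν := measure_ne_top ν E
    have fp := measure_ne_top p E
    have fq := measure_ne_top q E
    rw [← ENNReal.toReal_eq_toReal_iff' (by finiteness) (by finiteness),
      ENNReal.toReal_add fμ fq, ENNReal.toReal_add fν fp]
    simp only [measureReal_def] at h1; linarith
  have hiμ := VDE.integrable_of_bounded μ g hg C hC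
  have hiν := VDE.integrable_of_bounded ν g hg C hC
  have hip := VDE.integrable_of_bounded p g hg C hC
  have hiq := VDE.integrable_of_bounded q g hg C hC
  have hadd : ∫ x, g x ∂μ + ∫ x, g x ∂q = ∫ x, g x ∂ν + ∫ x, g x ∂p := by
    rw [← integral_add_measure hiμ hiq, ← integral_add_measure hiν hip, hμν]
  have hbp : |∫ x, g x ∂p| ≤ C * (p univ).toReal := by
    simpa [measureReal_def] using norm_integral_le_of_norm_le_const (μ := p) (f := g)
      (Filter.Eventually.of_forall (fun x => by simpa using hC x))
  have hbq : |∫ x, g x ∂q| ≤ C * (q univ).toReal := by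
    simpa [measureReal_def] using norm_integral_le_of_norm_le_const (μ := q) (f := g)
      (Filter.Eventually.of_forall (fun x => by simpa using hC x))
  have htv : tvDist μ ν = (p univ).toReal + (q univ).toReal := by
    rw [tvDist, SignedMeasure.totalVariation, Measure.add_apply,
      ENNReal.toReal_add (measure_ne_top _ _) (measure_ne_top _ _)]
  rw [htv]
  have heq : ∫ x, g x ∂μ - ∫ x, g x ∂ν = ∫ x, g x ∂p - ∫ x, g x ∂q := by linarith
  rw [heq]
  calc |∫ x, g x ∂p - ∫ x, g x ∂q| ≤ |∫ x, g x ∂p| + |∫ x, g x ∂q| := abs_sub _ _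
  _ ≤ C * (p univ).toReal + C * (q univ).toReal := by gcongr
  _ = C * ((p univ).toReal + (q univ).toReal) := by ring

lemma VDE.integrableOn_of_bounded {m : Measure ℝ} {E : Set ℝ} (hE : MeasurableSet E)
    (hfin : m E < ∞) {g : ℝ → ℝ} (hg : Measurable g) (C : ℝ) (hC : ∀ t ∈ E, |g t| ≤ C) :
    IntegrableOn g E m := by
  haveI : IsFiniteMeasure (m.restrict E) := ⟨by rwa [Measure.restrict_apply_univ]⟩
  refine ⟨hg.aestronglyMeasurable.restrict, HasFiniteIntegral.of_bounded (C := C) ?_⟩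
  exact (ae_restrict_iff' hE).2 (Filter.Eventually.of_forall
    (fun t ht => by simpa using hC t ht))

lemma VDE.abs_sup'_sub_sup'_le {ι : Type*} {s : Finset ι} (hs : s.Nonempty)
    (f g : ι → ℝ) (B : ℝ) (h : ∀ a ∈ s, |f a - g a| ≤ B) :
    |s.sup' hs f - s.sup' hs g| ≤ B := by
  rw [abs_sub_le_iff]
  constructor
  · rw [sub_le_iff_le_add]
    apply Finset.sup'_le
    intro a ha
    have h2 := (abs_sub_le_iff.1 (h a ha)).1
    have h3 : g a ≤ s.sup' hs g := Finset.le_sup' g ha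
    linarith
  · rw [sub_le_iff_le_add]
    apply Finset.sup'_le
    intro a ha
    have h2 := (abs_sub_le_iff.1 (h a ha)).2
    have h3 : f a ≤ s.sup' hs f := Finset.le_sup' f ha
    linarith

section partlemmas
variable {n j : ℕ}

lemma VDE.measurableSet_part (n j : ℕ) : MeasurableSet (part n j) := by
  unfold part; split <;> measurability

lemma VDE.volume_part_lt_top (n j : ℕ) : volume (part n j) < ∞ := by
  unfold part; split
  · exact measure_Icc_lt_top
  · exact measure_Ioc_lt_top

lemma VDE.part_subset (hn : 1 ≤ n) (h1 : 1 ≤ j) (h2 : j ≤ n) : part n j ⊆ Icc 0 1 := by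
  have hn0 : (0:ℝ) < n := by exact_mod_cast hn
  rw [part]
  split_ifs with hj
  · intro x hx
    exact ⟨hx.1, hx.2.trans (by rw [div_le_one hn0]; exact_mod_cast hn)⟩
  · intro x hx
    have h2' : (j:ℝ) ≤ n := by exact_mod_cast h2
    have hj2 : 2 ≤ j := by omega
    have hj2' : (2:ℝ) ≤ j := by exact_mod_cast hj2
    constructor
    · have h0 : (0:ℝ) ≤ ((j:ℝ)-1)/n := by
        apply div_nonneg _ (le_of_lt hn0); linarith
      linarith [hx.1]
    · exact hx.2.trans (by rw [div_le_one hn0]; exact h2')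

lemma VDE.abs_sub_le_of_mem_part (hn : 1 ≤ n) {x y : ℝ}
    (hx : x ∈ part n j) (hy : y ∈ part n j) : |x - y| ≤ 1 / n := by
  have hn0 : (0:ℝ) < n := by exact_mod_cast hn
  have hd : (j:ℝ)/n - ((j:ℝ)-1)/n = 1/n := by ring
  rw [part] at hx hy
  split_ifs at hx hy <;> rw [abs_sub_le_iff] <;> constructor <;>
    (obtain ⟨a1, a2⟩ := hx; obtain ⟨b1, b2⟩ := hy; linarith)

lemma VDE.volume_part (hn : 1 ≤ n) (h1 : 1 ≤ j) (h2 : j ≤ n) :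
    volume (part n j) = ENNReal.ofReal (1 / n) := by
  have hn0 : (0:ℝ) < n := by exact_mod_cast hn
  have hd : (j:ℝ)/n - ((j:ℝ)-1)/n = 1/n := by ring
  rw [part]
  split_ifs with hj
  · rw [Real.volume_Icc, sub_zero]
  · rw [Real.volume_Ioc, hd]

lemma VDE.part_disjoint (hn : 1 ≤ n) {j j' : ℕ} (h1 : 1 ≤ j) (h1' : 1 ≤ j')
    (hne : j ≠ j') : Disjoint (part n j) (part n j') := by
  have hn0 : (0:ℝ) < n := by exact_mod_cast hn
  wlog hlt : j < j' generalizing j j'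
  · exact (this h1' h1 hne.symm (by omega)).symm
  rw [Set.disjoint_left]
  intro x hx hx'
  have hub : x ≤ (j:ℝ)/n := by
    rw [part] at hx
    split_ifs at hx with hj
    · subst hj; simpa using hx.2
    · exact hx.2
  have hlb : ((j':ℝ)-1)/n < x := by
    have hj'1 : j' ≠ 1 := by omega
    rw [part, if_neg hj'1] at hx'
    exact hx'.1
  have hje : (j:ℝ) ≤ (j':ℝ) - 1 := by
    have : (j:ℝ) + 1 ≤ j' := by exact_mod_cast hlt
    linarith
  have : (j:ℝ)/n ≤ ((j':ℝ)-1)/n := by gcongr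
  linarith

lemma VDE.part_union (hn : 1 ≤ n) : ⋃ j ∈ Finset.Icc 1 n, part n j = Icc 0 1 := by
  have hn0 : (0:ℝ) < n := by exact_mod_cast hn
  apply Set.Subset.antisymm
  · refine Set.iUnion₂_subset fun j hj => ?_
    rw [Finset.mem_Icc] at hj
    exact VDE.part_subset hn hj.1 hj.2
  · intro x hx
    by_cases hx1 : x ≤ 1 / n
    · refine Set.mem_biUnion (Finset.mem_Icc.2 ⟨le_refl 1, hn⟩) ?_
      rw [part, if_pos rfl]
      exact ⟨hx.1, hx1⟩
    · push_neg at hx1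
      set j := ⌈(n:ℝ) * x⌉₊ with hj
      have hnx1 : (1:ℝ) < n * x := by
        have := (div_lt_iff₀ hn0).1 hx1
        nlinarith
      have hj2 : 2 ≤ j := by
        have : 1 < j := by rw [hj, Nat.lt_ceil]; exact_mod_cast hnx1
        omega
      have hjn : j ≤ n := by
        rw [hj, Nat.ceil_le]
        calc (n:ℝ) * x ≤ n * 1 := by nlinarith [hx.2]
        _ = n := by ring
      refine Set.mem_biUnion (Finset.mem_Icc.2 ⟨by omega, hjn⟩) ?_
      rw [part, if_neg (by omega)]
      constructor
      · rw [div_lt_iff₀ hn0]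
        have := Nat.ceil_lt_add_one (a := (n:ℝ)*x) (by positivity)
        rw [← hj] at this
        linarith
      · rw [le_div_iff₀ hn0]
        have := Nat.le_ceil ((n:ℝ)*x)
        rw [← hj] at this
        linarith
end partlemmas

/-- Lemma 1 of the paper (term `q₁`, constant corrected for error propagation over
the horizon): the optimal value functions `V_h` of the continuous-state MDP and the
optimal value functions `W_h` of the discretized MDP satisfy
`|V_h(x) − W_h(j)| ≤ (H − h + 1)·(H + 1)·L·n^(−α)` for `x ∈ I_j`. -/
theorem optimal_value_discretization_error {A : Type*} [Fintype A] [Nonempty A]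
    (H n : ℕ) (hH : 1 ≤ H) (hn : 1 ≤ n) (L α : ℝ) (hL : 0 < L) (hα : 0 < α)
    (r : ℝ → A → ℝ) (hrange : ∀ s ∈ Icc (0:ℝ) 1, ∀ a : A, r s a ∈ Icc (0:ℝ) 1)
    (hrmeas : ∀ a : A, Measurable fun s => r s a)
    (hrHolder : ∀ s ∈ Icc (0:ℝ) 1, ∀ s' ∈ Icc (0:ℝ) 1, ∀ a : A,
      |r s a - r s' a| ≤ L * |s - s'| ^ α)
    (μ : ℝ → A → Measure ℝ) [∀ s a, IsProbabilityMeasure (μ s a)]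
    (hsupp : ∀ s a, μ s a (Icc 0 1) = 1)
    (hμmeas : ∀ (a : A) (E : Set ℝ), MeasurableSet E →
      Measurable fun t => (μ t a E).toReal)
    (hμHolder : ∀ s ∈ Icc (0:ℝ) 1, ∀ s' ∈ Icc (0:ℝ) 1, ∀ a : A,
      tvDist (μ s a) (μ s' a) ≤ L * |s - s'| ^ α)
    (V : ℕ → ℝ → ℝ) (hVmeas : ∀ h, Measurable (V h))
    (hVtop : ∀ s, V (H + 1) s = 0)
    (hVint : ∀ h, 1 ≤ h → h ≤ H → ∀ s ∈ Icc (0:ℝ) 1, ∀ a : A,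
      IntegrableOn (V (h + 1)) (Icc 0 1) (μ s a))
    (hVBellman : ∀ h, 1 ≤ h → h ≤ H → ∀ s ∈ Icc (0:ℝ) 1,
      V h s = Finset.univ.sup' Finset.univ_nonempty
        (fun a : A => r s a + ∫ s' in Icc (0:ℝ) 1, V (h + 1) s' ∂(μ s a)))
    (W : ℕ → ℕ → ℝ) (hWtop : ∀ j, W (H + 1) j = 0)
    (hWBellman : ∀ h, 1 ≤ h → h ≤ H → ∀ j ∈ Finset.Icc 1 n,
      W h j = Finset.univ.sup' Finset.univ_nonempty
        (fun a : A => ragg n r j a +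
          ∑ j' ∈ Finset.Icc 1 n, Pagg n μ a j j' * W (h + 1) j')) :
    ∀ h, 1 ≤ h → h ≤ H + 1 → ∀ j ∈ Finset.Icc 1 n, ∀ x ∈ part n j,
      |V h x - W h j| ≤ ((H : ℝ) - h + 1) * ((H : ℝ) + 1) * L * (n : ℝ) ^ (-α) := by
  have hn0 : (0:ℝ) < n := by exact_mod_cast hn
  set β : ℝ := (n:ℝ) ^ (-α) with hβdef
  have hβ0 : (0:ℝ) ≤ β := Real.rpow_nonneg (le_of_lt hn0) _
  have hpm : ∀ j, MeasurableSet (part n j) := VDE.measurableSet_part n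
  have hvolF : ∀ j, volume (part n j) < ∞ := VDE.volume_part_lt_top n
  have hdisj : (↑(Finset.Icc 1 n) : Set ℕ).PairwiseDisjoint (part n) := by
    intro j hj j' hj' hne
    rw [Finset.coe_Icc, Set.mem_Icc] at hj hj'
    exact VDE.part_disjoint hn hj.1 hj'.1 hne
  have hvolT : ∀ j, 1 ≤ j → j ≤ n → (volume (part n j)).toReal = 1/(n:ℝ) := by
    intro j h1 h2
    rw [VDE.volume_part hn h1 h2, ENNReal.toReal_ofReal (by positivity)]
  have hcell : ∀ {j : ℕ}, 1 ≤ j → j ≤ n → ∀ {x y : ℝ}, x ∈ part n j → y ∈ part n j →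
      L * |x - y| ^ α ≤ L * β := by
    intro j h1 h2 x y hx hy
    have hle := VDE.abs_sub_le_of_mem_part hn hx hy
    have h3 : |x - y| ^ α ≤ (1/(n:ℝ)) ^ α :=
      Real.rpow_le_rpow (abs_nonneg _) hle (le_of_lt hα)
    have hid : (1/(n:ℝ)) ^ α = β := by
      rw [hβdef, one_div, Real.inv_rpow (le_of_lt hn0), Real.rpow_neg (le_of_lt hn0)]
    have h4 := mul_le_mul_of_nonneg_left h3 (le_of_lt hL)
    rwa [hid] at h4
  have hμsum : ∀ (t : ℝ) (a : A),
      ∑ j' ∈ Finset.Icc 1 n, (μ t a (part n j')).toReal = 1 := by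
    intro t a
    rw [← ENNReal.toReal_sum (fun _ _ => measure_ne_top _ _),
      ← measure_biUnion_finset hdisj (fun j _ => hpm j), VDE.part_union hn, hsupp t a,
      ENNReal.toReal_one]
  have hVbd : ∀ d h, h + d = H + 1 → 1 ≤ h → ∀ s ∈ Icc (0:ℝ) 1, |V h s| ≤ (d:ℝ) := by
    intro d
    induction d with
    | zero =>
      intro h hh _ s hs
      have he : h = H + 1 := by omega
      rw [he, hVtop]; simp
    | succ d ih =>
      intro h hh h1 s hs
      have hhH : h ≤ H := by omega
      rw [hVBellman h h1 hhH s hs]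
      have hbdint : ∀ a : A, |∫ s' in Icc (0:ℝ) 1, V (h+1) s' ∂(μ s a)| ≤ (d:ℝ) := by
        intro a
        have hb : ‖∫ s' in Icc (0:ℝ) 1, V (h+1) s' ∂(μ s a)‖
            ≤ (d:ℝ) * ((μ s a) (Icc (0:ℝ) 1)).toReal :=
          norm_setIntegral_le_of_norm_le_const (by finiteness)
            (fun y hy => by
              simpa [Real.norm_eq_abs] using ih (h+1) (by omega) (by omega) y hy)
        rwa [hsupp, ENNReal.toReal_one, mul_one, Real.norm_eq_abs] at hb
      rw [abs_le]
      constructor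
      · obtain ⟨a⟩ := ‹Nonempty A›
        refine le_trans ?_ (Finset.le_sup' _ (Finset.mem_univ a))
        have hr := hrange s hs a
        have hi := (abs_le.1 (hbdint a)).1
        push_cast
        simp only [mem_Icc] at hr
        linarith [hr.1]
      · apply Finset.sup'_le
        intro a _
        have hr := hrange s hs a
        have hi := (abs_le.1 (hbdint a)).2
        push_cast
        simp only [mem_Icc] at hr
        linarith [hr.2]
  have main : ∀ d h, h + d = H + 1 → 1 ≤ h → ∀ j ∈ Finset.Icc 1 n, ∀ x ∈ part n j,
      |V h x - W h j| ≤ (d:ℝ) * ((H:ℝ)+1) * L * β := by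
    intro d
    induction d with
    | zero =>
      intro h hh _ j hj x hx
      have he : h = H + 1 := by omega
      rw [he, hVtop, hWtop]; simp
    | succ d ih =>
      intro h hh h1 j hjmem x hx
      have hhH : h ≤ H := by omega
      have hj := Finset.mem_Icc.1 hjmem
      have hsub : part n j ⊆ Icc (0:ℝ) 1 := VDE.part_subset hn hj.1 hj.2
      have hxI : x ∈ Icc (0:ℝ) 1 := hsub hx
      rw [hVBellman h h1 hhH x hxI, hWBellman h h1 hhH j hjmem]
      apply VDE.abs_sup'_sub_sup'_le
      intro a _
      set D : ℝ := (d:ℝ) * ((H:ℝ)+1) * L * β with hD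
      have hD0 : 0 ≤ D := by
        rw [hD]; positivity
      -- reward term
      have hrint : IntegrableOn (fun s => r s a) (part n j) volume := by
        refine VDE.integrableOn_of_bounded (hpm j) (hvolF j) (hrmeas a) 1 ?_
        intro t ht
        have hr := hrange t (hsub ht) a
        simp only [mem_Icc] at hr
        rw [abs_le]; constructor <;> linarith [hr.1, hr.2]
      have hT1 : |r x a - ragg n r j a| ≤ L * β := by
        have hkey : ∀ t ∈ part n j, |r x a - r t a| ≤ L * β := fun t ht =>
          le_trans (hrHolder x hxI t (hsub ht) a) (hcell hj.1 hj.2 hx ht)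
        have heq : r x a - ragg n r j a
            = (n:ℝ) * ∫ t in part n j, (r x a - r t a) := by
          rw [integral_sub (integrableOn_const (C := r x a) (hvolF j).ne) hrint,
            setIntegral_const, smul_eq_mul, measureReal_def, hvolT j hj.1 hj.2, ragg]
          field_simp
        rw [heq, abs_mul, abs_of_nonneg (le_of_lt hn0)]
        have hb := norm_setIntegral_le_of_norm_le_const (hvolF j)
          (f := fun t => r x a - r t a) (C := L * β)
          (fun t ht => by simpa [Real.norm_eq_abs] using hkey t ht)
        rw [measureReal_def, hvolT j hj.1 hj.2, Real.norm_eq_abs] at hb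
        calc (n:ℝ) * |∫ t in part n j, (r x a - r t a)| ≤ (n:ℝ) * (L * β * (1/n)) := by
              exact mul_le_mul_of_nonneg_left hb (le_of_lt hn0)
        _ = L * β := by field_simp
      -- transition term
      have hIH : ∀ j' ∈ Finset.Icc 1 n, ∀ s ∈ part n j', |V (h+1) s - W (h+1) j'| ≤ D :=
        fun j' hj' s hs => ih (h+1) (by omega) (by omega) j' hj' s hs
      have hVb : ∀ y ∈ Icc (0:ℝ) 1, |V (h+1) y| ≤ (H:ℝ) := by
        intro y hy
        have hb := hVbd (H - h) (h+1) (by omega) (by omega) y hy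
        have hc : ((H - h : ℕ):ℝ) ≤ (H:ℝ) := by
          exact_mod_cast Nat.sub_le H h
        linarith
      set g : ℝ → ℝ := (Icc (0:ℝ) 1).indicator (V (h+1)) with hg
      have hgmeas : Measurable g := (hVmeas (h+1)).indicator measurableSet_Icc
      have hgbd : ∀ y, |g y| ≤ (H:ℝ) := by
        intro y
        by_cases hy : y ∈ Icc (0:ℝ) 1
        · rw [hg, indicator_of_mem hy]; exact hVb y hy
        · rw [hg, indicator_of_notMem hy, abs_zero]; positivity
      have hgint : ∀ t : ℝ, ∫ y, g y ∂(μ t a) = ∫ s' in Icc (0:ℝ) 1, V (h+1) s' ∂(μ t a) :=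
        fun t => integral_indicator measurableSet_Icc
      set c : ℝ := ∫ s' in Icc (0:ℝ) 1, V (h+1) s' ∂(μ x a) with hcdef
      have hTV : ∀ t ∈ part n j,
          |c - ∫ s' in Icc (0:ℝ) 1, V (h+1) s' ∂(μ t a)| ≤ (H:ℝ) * (L * β) := by
        intro t ht
        have htI : t ∈ Icc (0:ℝ) 1 := hsub ht
        have e1 := VDE.abs_integral_sub_le_tvDist (μ x a) (μ t a) g hgmeas (H:ℝ) hgbd
        rw [hgint x, hgint t] at e1
        have e2 : tvDist (μ x a) (μ t a) ≤ L * β :=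
          le_trans (hμHolder x hxI t htI a) (hcell hj.1 hj.2 hx ht)
        calc |c - ∫ s' in Icc (0:ℝ) 1, V (h+1) s' ∂(μ t a)|
            ≤ (H:ℝ) * tvDist (μ x a) (μ t a) := e1
        _ ≤ (H:ℝ) * (L * β) := mul_le_mul_of_nonneg_left e2 (by positivity)
      have hdis : ∀ t ∈ Icc (0:ℝ) 1,
          |(∫ s' in Icc (0:ℝ) 1, V (h+1) s' ∂(μ t a))
            - ∑ j' ∈ Finset.Icc 1 n, (μ t a (part n j')).toReal * W (h+1) j'| ≤ D := by
        intro t htI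
        have hint : IntegrableOn (V (h+1)) (Icc (0:ℝ) 1) (μ t a) := hVint h h1 hhH t htI a
        have hsplit : (∫ s' in Icc (0:ℝ) 1, V (h+1) s' ∂(μ t a))
            = ∑ j' ∈ Finset.Icc 1 n, ∫ s' in part n j', V (h+1) s' ∂(μ t a) := by
          rw [← VDE.part_union (n := n) hn]
          exact integral_biUnion_finset _ (fun j' _ => hpm j') hdisj
            (fun j' hj'' => hint.mono_set
              (VDE.part_subset hn (Finset.mem_Icc.1 hj'').1 (Finset.mem_Icc.1 hj'').2))
        have hterm : ∀ j' ∈ Finset.Icc 1 n,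
            |(∫ s' in part n j', V (h+1) s' ∂(μ t a))
              - (μ t a (part n j')).toReal * W (h+1) j'|
              ≤ (μ t a (part n j')).toReal * D := by
          intro j' hj'mem
          have hj' := Finset.mem_Icc.1 hj'mem
          have hWc : (∫ _ in part n j', W (h+1) j' ∂(μ t a))
              = (μ t a (part n j')).toReal * W (h+1) j' := by
            rw [setIntegral_const, smul_eq_mul, measureReal_def]
          have hVI : IntegrableOn (V (h+1)) (part n j') (μ t a) :=
            hint.mono_set (VDE.part_subset hn hj'.1 hj'.2)
          rw [← hWc, ← integral_sub hVI (integrableOn_const (measure_lt_top (μ t a) _).ne)]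
          have hb := norm_setIntegral_le_of_norm_le_const (measure_lt_top (μ t a) _)
            (f := fun s' => V (h+1) s' - W (h+1) j') (C := D)
            (fun s hs => by simpa [Real.norm_eq_abs] using hIH j' hj'mem s hs)
          rw [Real.norm_eq_abs, mul_comm] at hb; exact hb
        calc |(∫ s' in Icc (0:ℝ) 1, V (h+1) s' ∂(μ t a))
              - ∑ j' ∈ Finset.Icc 1 n, (μ t a (part n j')).toReal * W (h+1) j'|
            = |∑ j' ∈ Finset.Icc 1 n, ((∫ s' in part n j', V (h+1) s' ∂(μ t a))
              - (μ t a (part n j')).toReal * W (h+1) j')| := by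
              rw [hsplit, Finset.sum_sub_distrib]
        _ ≤ ∑ j' ∈ Finset.Icc 1 n, |(∫ s' in part n j', V (h+1) s' ∂(μ t a))
              - (μ t a (part n j')).toReal * W (h+1) j'| := Finset.abs_sum_le_sum_abs _ _
        _ ≤ ∑ j' ∈ Finset.Icc 1 n, (μ t a (part n j')).toReal * D := Finset.sum_le_sum hterm
        _ = (∑ j' ∈ Finset.Icc 1 n, (μ t a (part n j')).toReal) * D := by
              rw [Finset.sum_mul]
        _ = D := by rw [hμsum t a, one_mul]
      -- rewrite the aggregated sum as an integral
      have hWint : ∀ j' : ℕ, IntegrableOn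
          (fun t => (μ t a (part n j')).toReal * W (h+1) j') (part n j) volume := by
        intro j'
        refine VDE.integrableOn_of_bounded (hpm j) (hvolF j) ((hμmeas a _ (hpm j')).mul_const _)
          (|W (h+1) j'|) ?_
        intro t _
        rw [abs_mul]
        have h01 : (μ t a (part n j')).toReal ≤ 1 := by
          have := prob_le_one (μ := μ t a) (s := part n j')
          exact ENNReal.toReal_le_of_le_ofReal one_pos.le (by simpa using this)
        have h00 : 0 ≤ (μ t a (part n j')).toReal := ENNReal.toReal_nonneg
        calc |(μ t a (part n j')).toReal| * |W (h+1) j'| ≤ 1 * |W (h+1) j'| := by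
              rw [abs_of_nonneg h00]; exact mul_le_mul_of_nonneg_right h01 (abs_nonneg _)
        _ = |W (h+1) j'| := one_mul _
      have hPsum : (∑ j' ∈ Finset.Icc 1 n, Pagg n μ a j j' * W (h+1) j')
          = (n:ℝ) * ∫ t in part n j,
              (∑ j' ∈ Finset.Icc 1 n, (μ t a (part n j')).toReal * W (h+1) j') := by
        rw [integral_finset_sum _ (fun j' _ => hWint j'), Finset.mul_sum]
        refine Finset.sum_congr rfl (fun j' _ => ?_)
        rw [Pagg, integral_mul_const]
        ring
      have hFint : IntegrableOn
          (fun t => ∑ j' ∈ Finset.Icc 1 n, (μ t a (part n j')).toReal * W (h+1) j')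
          (part n j) volume := integrable_finset_sum _ (fun j' _ => hWint j')
      have hT2 : |c - ∑ j' ∈ Finset.Icc 1 n, Pagg n μ a j j' * W (h+1) j'|
          ≤ (H:ℝ) * (L * β) + D := by
        rw [hPsum]
        have heq2 : c - (n:ℝ) * (∫ t in part n j,
              (∑ j' ∈ Finset.Icc 1 n, (μ t a (part n j')).toReal * W (h+1) j'))
            = (n:ℝ) * ∫ t in part n j,
              (c - ∑ j' ∈ Finset.Icc 1 n, (μ t a (part n j')).toReal * W (h+1) j') := by
          rw [integral_sub (integrableOn_const (C := c) (hvolF j).ne) hFint,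
            setIntegral_const, smul_eq_mul, measureReal_def, hvolT j hj.1 hj.2]
          field_simp
        rw [heq2, abs_mul, abs_of_nonneg (le_of_lt hn0)]
        have hb := norm_setIntegral_le_of_norm_le_const (hvolF j)
          (f := fun t => c - ∑ j' ∈ Finset.Icc 1 n, (μ t a (part n j')).toReal * W (h+1) j')
          (C := (H:ℝ) * (L * β) + D)
          (fun t ht => by
            have e1 := hTV t ht
            have e2 := hdis t (hsub ht)
            have e3 : |c - ∑ j' ∈ Finset.Icc 1 n, (μ t a (part n j')).toReal * W (h+1) j'|
                ≤ (H:ℝ) * (L * β) + D :=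
              le_trans (abs_sub_le _ _ _) (add_le_add e1 e2)
            simpa [Real.norm_eq_abs] using e3)
        rw [measureReal_def, hvolT j hj.1 hj.2, Real.norm_eq_abs] at hb
        calc (n:ℝ) * |∫ t in part n j,
              (c - ∑ j' ∈ Finset.Icc 1 n, (μ t a (part n j')).toReal * W (h+1) j')|
            ≤ (n:ℝ) * (((H:ℝ) * (L * β) + D) * (1/n)) :=
              mul_le_mul_of_nonneg_left hb (le_of_lt hn0)
        _ = (H:ℝ) * (L * β) + D := by field_simp
      -- combine
      have hsplit2 : (r x a + c)
          - (ragg n r j a + ∑ j' ∈ Finset.Icc 1 n, Pagg n μ a j j' * W (h+1) j')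
          = (r x a - ragg n r j a)
            + (c - ∑ j' ∈ Finset.Icc 1 n, Pagg n μ a j j' * W (h+1) j') := by ring
      calc |(r x a + c)
          - (ragg n r j a + ∑ j' ∈ Finset.Icc 1 n, Pagg n μ a j j' * W (h+1) j')|
          ≤ |r x a - ragg n r j a|
            + |c - ∑ j' ∈ Finset.Icc 1 n, Pagg n μ a j j' * W (h+1) j'| := by
            rw [hsplit2]; exact abs_add_le _ _
      _ ≤ L * β + ((H:ℝ) * (L * β) + D) := add_le_add hT1 hT2
      _ = ((d+1:ℕ):ℝ) * ((H:ℝ)+1) * L * β := by rw [hD]; push_cast; ring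
  intro h h1 hH1 j hj x hx
  have hm := main (H + 1 - h) h (by omega) h1 j hj x hx
  have hcast : ((H + 1 - h : ℕ):ℝ) = (H:ℝ) - h + 1 := by
    rw [Nat.cast_sub (by omega : h ≤ H + 1)]
    push_cast
    ring
  rwa [hcast] at hm
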